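/- arXiv:2105.01591 — 2 statements merged into one kernel-verified Lean document; each statement's English description precedes it below -/
import Mathlib

section
/- Let π, ρ ∈ Sₙ have separated descents at position k (π has no descents before k, ρ has no descents after k). Define π⋆ρ on [1-k, 2n-k] by: π⋆ρ(i) = π(i+k) - k for i ∈ [1-k, 0]; π⋆ρ(i) = ρ(i) + n - k for i ∈ [1, k]; π⋆ρ(i) = π(i) - k for i ∈ [k+1, n]; and for i ∈ [n+1, 2n-k], π⋆ρ(i) is the (i-n)th smallest element of [1-k, 2n-k] not among the previously assigned values. Then π⋆ρ is a bijection from [1-k, 2n-k] to [1-k, 2n-k]. -/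
/-- `π` has no descents before position `k`: every descent `i` satisfies `i ≥ k`. -/
def NoDescentsBefore (π : ℤ → ℤ) (k : ℤ) : Prop :=
  ∀ i : ℤ, 1 ≤ i → i < k → π i < π (i + 1)

/-- `ρ` has no descents after position `k`: every descent `i` satisfies `i ≤ k`. -/
def NoDescentsAfter (ρ : ℤ → ℤ) (k n : ℤ) : Prop :=
  ∀ i : ℤ, k < i → i < n → ρ i < ρ (i + 1)

/-- The star operation `π⋆ρ` defined on the interval `[1-k, 2n-k]`. -/
noncomputable def starMap (n k : ℤ) (π ρ : ℤ → ℤ) : ℤ → ℤ := fun i =>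
  if 1 - k ≤ i ∧ i ≤ 0 then π (i + k) - k
  else if 1 ≤ i ∧ i ≤ k then ρ i + n - k
  else if k + 1 ≤ i ∧ i ≤ n then π i - k
  else
    ((Finset.Icc (1 - k) (2 * n - k) \
        (Finset.Icc (1 - k) n).image (fun j =>
          if 1 - k ≤ j ∧ j ≤ 0 then π (j + k) - k
          else if 1 ≤ j ∧ j ≤ k then ρ j + n - k
          else π j - k)).sort (· ≤ ·)).getD (i - n - 1).toNat 0

/-!
On `[1-k, n]` the map `π⋆ρ` is injective: the outer blocks `[1-k, 0] ∪ [k+1, n]` carry `π`,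
re-indexed onto `[1, n]` and shifted by `-k`, so their values fill `[1-k, n-k]`, while the block
`[1, k]` carries `ρ` shifted by `n-k`, with values in `[n-k+1, 2n-k]`. The remaining `n-k`
positions list, in increasing order, the `n-k` values of `[1-k, 2n-k]` not yet taken.
-/

open Set

theorem Set.InjOn.union_of_mapsTo_disjoint {α β : Type*} {f : α → β} {s₁ s₂ : Set α}
    {t₁ t₂ : Set β} (h₁ : InjOn f s₁) (h₂ : InjOn f s₂) (hf₁ : MapsTo f s₁ t₁)
    (hf₂ : MapsTo f s₂ t₂) (ht : Disjoint t₁ t₂) : InjOn f (s₁ ∪ s₂) := by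
  rintro x (hx | hx) y (hy | hy) hxy
  · exact h₁ hx hy hxy
  · exact (ht.ne_of_mem (hf₁ hx) (hf₂ hy) hxy).elim
  · exact (ht.ne_of_mem (hf₁ hy) (hf₂ hx) hxy.symm).elim
  · exact h₂ hx hy hxy

theorem Set.BijOn.union_of_disjoint {α β : Type*} {f : α → β} {s₁ s₂ : Set α} {t₁ t₂ : Set β}
    (h₁ : BijOn f s₁ t₁) (h₂ : BijOn f s₂ t₂) (ht : Disjoint t₁ t₂) :
    BijOn f (s₁ ∪ s₂) (t₁ ∪ t₂) :=
  h₁.union h₂ (h₁.injOn.union_of_mapsTo_disjoint h₂.injOn h₁.mapsTo h₂.mapsTo ht)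

theorem List.Nodup.bijOn_getD {α : Type*} {L : List α} (hL : L.Nodup) (a : ℤ) (d : α) :
    BijOn (fun i => L.getD (i - a).toNat d) (Set.Ico a (a + L.length)) {x | x ∈ L} := by
  have hlt : ∀ i ∈ Set.Ico a (a + L.length), (i - a).toNat < L.length := fun i hi => by
    rw [mem_Ico] at hi; omega
  refine ⟨fun i hi => ?_, fun i hi j hj hij => ?_, fun x hx => ?_⟩
  · show L.getD _ d ∈ L
    rw [L.getD_eq_getElem d (hlt i hi)]
    exact L.getElem_mem _
  · simp only [L.getD_eq_getElem d (hlt i hi), L.getD_eq_getElem d (hlt j hj)] at hij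
    have := hL.getElem_inj_iff.mp hij
    rw [mem_Ico] at hi hj
    omega
  · obtain ⟨m, hm, rfl⟩ := List.mem_iff_getElem.mp hx
    refine ⟨a + m, by rw [mem_Ico]; omega, ?_⟩
    simp only [add_sub_cancel_left, Int.toNat_natCast, L.getD_eq_getElem d hm]

/-- The function whose image of `[1-k, n]` the last branch of `starMap` leaves out. -/
def starHead (n k : ℤ) (π ρ : ℤ → ℤ) : ℤ → ℤ := fun j =>
  if 1 - k ≤ j ∧ j ≤ 0 then π (j + k) - k
  else if 1 ≤ j ∧ j ≤ k then ρ j + n - k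
  else π j - k

noncomputable def starUnassigned (n k : ℤ) (π ρ : ℤ → ℤ) : Finset ℤ :=
  Finset.Icc (1 - k) (2 * n - k) \ (Finset.Icc (1 - k) n).image (starHead n k π ρ)

section

variable {n k : ℤ} {π ρ : ℤ → ℤ}

theorem starMap_eqOn_starHead : EqOn (starMap n k π ρ) (starHead n k π ρ) (Icc (1 - k) n) := by
  intro i hi
  rw [mem_Icc] at hi
  unfold starMap starHead
  split_ifs <;> first | rfl | omega

theorem starMap_of_lt (hkn : k ≤ n) {i : ℤ} (hi : n < i) :
    starMap n k π ρ i = ((starUnassigned n k π ρ).sort (· ≤ ·)).getD (i - (n + 1)).toNat 0 := by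
  unfold starMap
  rw [if_neg (by omega), if_neg (by omega), if_neg (by omega), sub_sub]
  rfl

theorem bijOn_starHead_outer (hk : 0 ≤ k) (hkn : k ≤ n) (hπ : BijOn π (Icc 1 n) (Icc 1 n)) :
    BijOn (starHead n k π ρ) (Icc (1 - k) 0 ∪ Icc (k + 1) n) (Icc (1 - k) (n - k)) := by
  have hunfold : BijOn (fun j => if j ≤ 0 then j + k else j)
      (Icc (1 - k) 0 ∪ Icc (k + 1) n) (Icc 1 n) := by
    refine ⟨fun j hj => ?_, fun a ha b hb hab => ?_, fun x hx => ?_⟩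
    · simp only [mem_union, mem_Icc] at hj ⊢
      split_ifs <;> omega
    · simp only [mem_union, mem_Icc] at ha hb
      dsimp only at hab
      split_ifs at hab <;> omega
    · rw [mem_Icc] at hx
      by_cases hxk : x ≤ k
      · exact ⟨x - k, by simp only [mem_union, mem_Icc]; omega, by simp only; split_ifs <;> omega⟩
      · exact ⟨x, by simp only [mem_union, mem_Icc]; omega, by simp only; split_ifs <;> omega⟩
  have hshift : BijOn (· - k) (Icc 1 n) (Icc (1 - k) (n - k)) := by
    refine ⟨fun x hx => ?_, fun x _ y _ hxy => ?_, fun y hy => ⟨y + k, ?_, ?_⟩⟩ <;>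
      simp only [mem_Icc] at * <;> omega
  refine (hshift.comp (hπ.comp hunfold)).congr fun j hj => ?_
  simp only [mem_union, mem_Icc] at hj
  simp only [starHead, Function.comp_apply]
  split_ifs <;> first | rfl | omega

theorem injOn_starHead_middle (hkn : k ≤ n) (hρ : InjOn ρ (Icc 1 n)) :
    InjOn (starHead n k π ρ) (Icc 1 k) := by
  intro a ha b hb hab
  rw [mem_Icc] at ha hb
  simp only [starHead, if_neg (show ¬(1 - k ≤ a ∧ a ≤ 0) by omega),
    if_neg (show ¬(1 - k ≤ b ∧ b ≤ 0) by omega), if_pos ha, if_pos hb] at hab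
  exact hρ (by rw [mem_Icc]; omega) (by rw [mem_Icc]; omega) (by omega)

theorem mapsTo_starHead_middle (hkn : k ≤ n) (hρ : MapsTo ρ (Icc 1 n) (Icc 1 n)) :
    MapsTo (starHead n k π ρ) (Icc 1 k) (Icc (n - k + 1) (2 * n - k)) := by
  intro a ha
  rw [mem_Icc] at ha
  have := hρ (show a ∈ Icc 1 n by rw [mem_Icc]; omega)
  simp only [starHead, if_neg (show ¬(1 - k ≤ a ∧ a ≤ 0) by omega), if_pos ha, mem_Icc]
    at this ⊢
  omega

theorem Icc_eq_outer_union_middle (hk : 0 ≤ k) (hkn : k ≤ n) :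
    Icc (1 - k) n = (Icc (1 - k) 0 ∪ Icc (k + 1) n) ∪ Icc 1 k := by
  ext
  simp only [mem_union, mem_Icc]
  omega

theorem injOn_starHead (hk : 0 ≤ k) (hkn : k ≤ n) (hπ : BijOn π (Icc 1 n) (Icc 1 n))
    (hρ : BijOn ρ (Icc 1 n) (Icc 1 n)) : InjOn (starHead n k π ρ) (Icc (1 - k) n) := by
  have houter := bijOn_starHead_outer (ρ := ρ) hk hkn hπ
  rw [Icc_eq_outer_union_middle hk hkn]
  refine houter.injOn.union_of_mapsTo_disjoint (injOn_starHead_middle hkn hρ.injOn)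
    houter.mapsTo (mapsTo_starHead_middle hkn hρ.mapsTo) (disjoint_left.2 fun x h₁ h₂ => ?_)
  rw [mem_Icc] at h₁ h₂
  omega

theorem mapsTo_starHead (hk : 0 ≤ k) (hkn : k ≤ n) (hπ : BijOn π (Icc 1 n) (Icc 1 n))
    (hρ : BijOn ρ (Icc 1 n) (Icc 1 n)) :
    MapsTo (starHead n k π ρ) (Icc (1 - k) n) (Icc (1 - k) (2 * n - k)) := by
  rw [Icc_eq_outer_union_middle hk hkn]
  refine ((bijOn_starHead_outer hk hkn hπ).mapsTo.union_union
    (mapsTo_starHead_middle hkn hρ.mapsTo)).mono_right fun x hx => ?_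
  simp only [mem_union, mem_Icc] at hx ⊢
  omega

theorem bijOn_starMap_head (hk : 0 ≤ k) (hkn : k ≤ n) (hπ : BijOn π (Icc 1 n) (Icc 1 n))
    (hρ : BijOn ρ (Icc 1 n) (Icc 1 n)) :
    BijOn (starMap n k π ρ) (Icc (1 - k) n)
      ((Finset.Icc (1 - k) n).image (starHead n k π ρ)) := by
  rw [Finset.coe_image, Finset.coe_Icc]
  exact (injOn_starHead hk hkn hπ hρ).bijOn_image.congr starMap_eqOn_starHead.symm

theorem image_starHead_subset (hk : 0 ≤ k) (hkn : k ≤ n) (hπ : BijOn π (Icc 1 n) (Icc 1 n))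
    (hρ : BijOn ρ (Icc 1 n) (Icc 1 n)) :
    (Finset.Icc (1 - k) n).image (starHead n k π ρ) ⊆ Finset.Icc (1 - k) (2 * n - k) := by
  rw [← Finset.coe_subset, Finset.coe_image, Finset.coe_Icc, Finset.coe_Icc]
  exact (mapsTo_starHead hk hkn hπ hρ).image_subset

theorem bijOn_starMap_tail (hk : 0 ≤ k) (hkn : k ≤ n) (hπ : BijOn π (Icc 1 n) (Icc 1 n))
    (hρ : BijOn ρ (Icc 1 n) (Icc 1 n)) :
    BijOn (starMap n k π ρ) (Icc (n + 1) (2 * n - k)) (starUnassigned n k π ρ) := by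
  have hcard : ((starUnassigned n k π ρ).card : ℤ) = n - k := by
    rw [starUnassigned, Finset.card_sdiff_of_subset (image_starHead_subset hk hkn hπ hρ),
      Finset.card_image_of_injOn (by simpa using injOn_starHead hk hkn hπ hρ),
      Int.card_Icc, Int.card_Icc]
    omega
  have hsort := ((starUnassigned n k π ρ).sort_nodup (· ≤ ·)).bijOn_getD (n + 1) 0
  rw [Finset.length_sort, hcard] at hsort
  have hdom : Set.Ico (n + 1) (n + 1 + (n - k)) = Icc (n + 1) (2 * n - k) := by
    ext
    simp only [mem_Ico, mem_Icc]
    omega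
  simp only [hdom, Finset.mem_sort, Finset.setOfPred_mem] at hsort
  exact hsort.congr fun i hi => (starMap_of_lt hkn (by rw [mem_Icc] at hi; omega)).symm

end

theorem star_bijOn_general (n k : ℤ) (π ρ : ℤ → ℤ) (hk1 : 1 ≤ k) (hkn : k ≤ n)
    (hπ : Set.BijOn π (Set.Icc 1 n) (Set.Icc 1 n))
    (hρ : Set.BijOn ρ (Set.Icc 1 n) (Set.Icc 1 n)) :
    Set.BijOn (starMap n k π ρ) (Set.Icc (1 - k) (2 * n - k))
      (Set.Icc (1 - k) (2 * n - k)) := by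
  have hk : 0 ≤ k := by omega
  have hdom : Icc (1 - k) n ∪ Icc (n + 1) (2 * n - k) = Icc (1 - k) (2 * n - k) := by
    ext
    simp only [mem_union, mem_Icc]
    omega
  have hbij := (bijOn_starMap_head hk hkn hπ hρ).union_of_disjoint
    (bijOn_starMap_tail hk hkn hπ hρ) (Finset.disjoint_coe.2 Finset.disjoint_sdiff)
  rwa [starUnassigned, ← Finset.coe_union,
    Finset.union_sdiff_of_subset (image_starHead_subset hk hkn hπ hρ), Finset.coe_Icc, hdom] at hbij

theorem star_bijOn (n k : ℤ) (π ρ : ℤ → ℤ) (hn : 1 ≤ n) (hk1 : 1 ≤ k) (hkn : k ≤ n)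
    (hπ : Set.BijOn π (Set.Icc 1 n) (Set.Icc 1 n))
    (hρ : Set.BijOn ρ (Set.Icc 1 n) (Set.Icc 1 n))
    (hπd : NoDescentsBefore π k) (hρd : NoDescentsAfter ρ k n) :
    Set.BijOn (starMap n k π ρ) (Set.Icc (1 - k) (2 * n - k))
      (Set.Icc (1 - k) (2 * n - k)) :=
  star_bijOn_general n k π ρ hk1 hkn hπ hρ
end

section
/- Let π, ρ ∈ Sₙ have separated descents at position k. Then the Coxeter length of π⋆ρ (viewed as a permutation of the interval [1-k, 2n-k], i.e., the number of inversions) equals ℓ(π) + ℓ(ρ) + k(n-k). -/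
/-- The number of inversions of `f` on the interval `[a, b]`. -/
noncomputable def invCount (f : ℤ → ℤ) (a b : ℤ) : ℕ :=
  ((Finset.Icc a b ×ˢ Finset.Icc a b).filter (fun p => p.1 < p.2 ∧ f p.2 < f p.1)).card

/-!
The positions `[1-k, 2n-k]` of `π⋆ρ` split into `P = (-k, 0] ∪ (k, n]` and
`Q = (0, k] ∪ (n, 2n-k]`. Along `P` the entries of `π⋆ρ` are those of `π` shifted by `-k`, and
along `Q` those of `ρ` shifted by `n-k`: on `(n, 2n-k]` this is because the unused values are
`ρ(k+1) + n-k, …, ρ(n) + n-k`, which are already increasing since `ρ` has no descents after `k`.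
So the inversions inside `P` and inside `Q` number `ℓ(π)` and `ℓ(ρ)`. Every value on `P` lies
below every value on `Q`, so the remaining inversions are exactly the pairs of a position in
`(0, k]` followed by one in `(k, n]`, which gives `k(n-k)`.
-/

open Finset

section CrossInversions

variable {α β γ δ : Type*} [LinearOrder α] [LinearOrder β] [LinearOrder γ] [LinearOrder δ]

def crossInvCount (f : α → β) (s t : Finset α) : ℕ :=
  #{p ∈ s ×ˢ t | p.1 < p.2 ∧ f p.2 < f p.1}

theorem invCount_eq_crossInvCount (f : ℤ → ℤ) (a b : ℤ) :
    invCount f a b = crossInvCount f (Icc a b) (Icc a b) :=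
  rfl

theorem crossInvCount_union_left (f : α → β) {s₁ s₂ : Finset α} (t : Finset α)
    (h : Disjoint s₁ s₂) :
    crossInvCount f (s₁ ∪ s₂) t = crossInvCount f s₁ t + crossInvCount f s₂ t := by
  rw [crossInvCount, union_product, filter_union,
    card_union_of_disjoint (disjoint_filter_filter (disjoint_product.2 (.inl h)))]
  rfl

theorem crossInvCount_union_right (f : α → β) (s : Finset α) {t₁ t₂ : Finset α}
    (h : Disjoint t₁ t₂) :
    crossInvCount f s (t₁ ∪ t₂) = crossInvCount f s t₁ + crossInvCount f s t₂ := by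
  rw [crossInvCount, product_union, filter_union,
    card_union_of_disjoint (disjoint_filter_filter (disjoint_product.2 (.inr h)))]
  rfl

theorem crossInvCount_union_union (f : α → β) {s t : Finset α} (h : Disjoint s t) :
    crossInvCount f (s ∪ t) (s ∪ t) =
      crossInvCount f s s + crossInvCount f t t + crossInvCount f s t + crossInvCount f t s := by
  rw [crossInvCount_union_left f _ h, crossInvCount_union_right f _ h,
    crossInvCount_union_right f _ h]
  ring

theorem crossInvCount_eq_zero {f : α → β} {s t : Finset α}
    (h : ∀ i ∈ s, ∀ j ∈ t, i < j → f i ≤ f j) : crossInvCount f s t = 0 := by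
  rw [crossInvCount, card_eq_zero, filter_eq_empty_iff]
  rintro ⟨i, j⟩ hij ⟨hlt, hf⟩
  rw [mem_product] at hij
  exact (h i hij.1 j hij.2 hlt).not_gt hf

theorem crossInvCount_eq_card_mul {f : α → β} {s t : Finset α}
    (h : ∀ i ∈ s, ∀ j ∈ t, i < j ∧ f j < f i) : crossInvCount f s t = #s * #t := by
  rw [crossInvCount, filter_true_of_mem, card_product]
  rintro ⟨i, j⟩ hij
  rw [mem_product] at hij
  exact h i hij.1 j hij.2

theorem crossInvCount_image_of_strictMono {f : α → β} {σ : γ → α} {g : γ → δ} {φ : δ → β}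
    (hσ : StrictMono σ) (hφ : StrictMono φ) {s t : Finset γ}
    (h : ∀ j ∈ s ∪ t, f (σ j) = φ (g j)) :
    crossInvCount f (s.image σ) (t.image σ) = crossInvCount g s t := by
  rw [crossInvCount, ← prodMap_image_product, filter_image,
    card_image_of_injective _ (hσ.injective.prodMap hσ.injective)]
  refine congrArg card (filter_congr fun ⟨i, j⟩ hij => ?_)
  rw [mem_product] at hij
  simp only [Prod.map_fst, Prod.map_snd, hσ.lt_iff_lt, h i (mem_union_left _ hij.1),
    h j (mem_union_right _ hij.2), hφ.lt_iff_lt]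

end CrossInversions

theorem Finset.getD_sort_image_Ioc {α : Type*} [LinearOrder α] {g : ℤ → α} {a b : ℤ}
    (hg : StrictMonoOn g (Set.Ioc a b)) {i : ℕ} (hi : a + i < b) (d : α) :
    (((Ioc a b).image g).sort (· ≤ ·)).getD i d = g (a + 1 + i) := by
  set m := (b - a).toNat
  set G : Fin m → α := fun j => g (a + 1 + j)
  have hG : StrictMono G := fun x y hxy =>
    hg ⟨by omega, by have := x.2; omega⟩ ⟨by omega, by have := y.2; omega⟩ (by simpa using hxy)
  have himage : (Ioc a b).image g = univ.image G := by
    ext x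
    simp only [mem_image, mem_Ioc, mem_univ, true_and]
    constructor
    · rintro ⟨y, hy, rfl⟩
      exact ⟨⟨(y - a - 1).toNat, by omega⟩, by simp only [G]; congr 1; omega⟩
    · rintro ⟨j, rfl⟩
      exact ⟨_, ⟨by omega, by omega⟩, rfl⟩
  have hcard : #(univ.image G) = m := by
    rw [card_image_of_injective _ hG.injective, card_univ, Fintype.card_fin]
  rw [himage, List.getD_eq_getElem _ _ (by simp [hcard]; omega)]
  exact (congrFun (orderEmbOfFin_unique hcard (fun j => mem_image_of_mem G (mem_univ j)) hG)
    ⟨i, by omega⟩).symm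

theorem NoDescentsAfter.strictMonoOn {ρ : ℤ → ℤ} {k n : ℤ} (h : NoDescentsAfter ρ k n) :
    StrictMonoOn ρ (Set.Ioc k n) :=
  strictMonoOn_of_lt_add_one Set.ordConnected_Ioc fun i _ hi hi1 => h i hi.1 (by grind)

section StarMap

variable {n k : ℤ} {π ρ : ℤ → ℤ}

theorem starMap_of_nonpos {i : ℤ} (h₁ : -k < i) (h₂ : i ≤ 0) :
    starMap n k π ρ i = π (i + k) - k := by
  rw [starMap, if_pos ⟨by omega, h₂⟩]

theorem starMap_of_pos_of_le {i : ℤ} (h₁ : 0 < i) (h₂ : i ≤ k) :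
    starMap n k π ρ i = ρ i + n - k := by
  rw [starMap, if_neg (by omega), if_pos ⟨h₁, h₂⟩]

theorem starMap_of_lt_of_le {i : ℤ} (h₁ : k < i) (h₂ : i ≤ n) :
    starMap n k π ρ i = π i - k := by
  rw [starMap, if_neg (by omega), if_neg (by omega), if_pos ⟨h₁, h₂⟩]

theorem sdiff_image_starMap (hk : 0 ≤ k) (hπ : Set.BijOn π (Set.Icc 1 n) (Set.Icc 1 n))
    (hρ : Set.BijOn ρ (Set.Icc 1 n) (Set.Icc 1 n)) :
    Icc (1 - k) (2 * n - k) \ (Icc (1 - k) n).image (starMap n k π ρ) =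
      (Ioc k n).image (fun j => ρ j + n - k) := by
  have hπn (j) (hj : j ∈ Set.Icc 1 n) : π j ≤ n := (hπ.mapsTo hj).2
  ext x
  simp only [mem_sdiff, mem_Icc, mem_image, mem_Ioc, not_exists, not_and]
  constructor
  · rintro ⟨hx, hxW⟩
    by_cases hxk : x ≤ n - k
    · obtain ⟨y, ⟨hy₁, hy₂⟩, hπy⟩ := hπ.surjOn (show x + k ∈ Set.Icc 1 n by grind)
      rcases le_or_gt y k with hyk | hyk
      · refine (hxW (y - k) ⟨by omega, by omega⟩ ?_).elim
        rw [starMap_of_nonpos (by omega) (by omega), sub_add_cancel, hπy, add_sub_cancel_right]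
      · refine (hxW y ⟨by omega, hy₂⟩ ?_).elim
        rw [starMap_of_lt_of_le hyk hy₂, hπy, add_sub_cancel_right]
    · obtain ⟨y, ⟨hy₁, hy₂⟩, hρy⟩ := hρ.surjOn (show x - n + k ∈ Set.Icc 1 n by grind)
      rcases le_or_gt y k with hyk | hyk
      · refine (hxW y ⟨by omega, by omega⟩ ?_).elim
        rw [starMap_of_pos_of_le (by omega) hyk, hρy]
        ring
      · exact ⟨y, ⟨hyk, hy₂⟩, by omega⟩
  · rintro ⟨j, hj, rfl⟩
    obtain ⟨hρj₁, hρj₂⟩ := hρ.mapsTo (show j ∈ Set.Icc 1 n by grind)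
    refine ⟨⟨by grind, by grind⟩, fun i hi hfi => ?_⟩
    rcases lt_or_ge 0 i with hi0 | hi0
    · rcases le_or_gt i k with hik | hik
      · rw [starMap_of_pos_of_le hi0 hik] at hfi
        have := hρ.injOn (show i ∈ Set.Icc 1 n by grind) (show j ∈ Set.Icc 1 n by grind)
          (by omega)
        omega
      · rw [starMap_of_lt_of_le hik hi.2] at hfi
        have := hπn i ⟨by omega, hi.2⟩
        omega
    · rw [starMap_of_nonpos (by omega) hi0] at hfi
      have := hπn (i + k) ⟨by omega, by omega⟩
      omega

theorem starMap_of_gt (hk : 0 ≤ k) (hπ : Set.BijOn π (Set.Icc 1 n) (Set.Icc 1 n))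
    (hρ : Set.BijOn ρ (Set.Icc 1 n) (Set.Icc 1 n)) (hρd : NoDescentsAfter ρ k n) {i : ℤ}
    (h₁ : n < i) (h₂ : i ≤ 2 * n - k) :
    starMap n k π ρ i = ρ (i - n + k) + n - k := by
  rw [starMap, if_neg (by omega), if_neg (by omega), if_neg (by omega),
    image_congr (g := starMap n k π ρ), sdiff_image_starMap hk hπ hρ,
    getD_sort_image_Ioc (g := fun j => ρ j + n - k)
      (fun a ha b hb hab => by dsimp only; linarith [hρd.strictMonoOn ha hb hab]) (by omega)]
  · rw [show k + 1 + ((i - n - 1).toNat : ℤ) = i - n + k by omega]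
  · intro j hj
    rw [mem_coe, mem_Icc] at hj
    dsimp only [starMap]
    split_ifs <;> first | rfl | omega

-- `starPosLeft k` and `starPosRight n k` send the positions `[1, n]` of `π` and of `ρ` to the
-- positions of `π⋆ρ` that carry their (shifted) entries.
def starPosLeft (k j : ℤ) : ℤ := if j ≤ k then j - k else j

def starPosRight (n k j : ℤ) : ℤ := if j ≤ k then j else j + n - k

theorem starPosLeft_strictMono (hk : 0 ≤ k) : StrictMono (starPosLeft k) := by
  intro a b hab
  unfold starPosLeft
  split_ifs <;> omega

theorem starPosRight_strictMono (hkn : k ≤ n) : StrictMono (starPosRight n k) := by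
  intro a b hab
  unfold starPosRight
  split_ifs <;> omega

theorem image_starPosLeft (hk : 0 ≤ k) (hkn : k ≤ n) :
    (Icc 1 n).image (starPosLeft k) = Ioc (-k) 0 ∪ Ioc k n := by
  ext x
  simp only [mem_image, mem_Icc, mem_union, mem_Ioc, starPosLeft]
  constructor
  · rintro ⟨j, hj, rfl⟩
    split_ifs <;> omega
  · intro hx
    exact ⟨if x ≤ 0 then x + k else x, by split_ifs <;> omega, by split_ifs <;> omega⟩

theorem image_starPosRight (hk : 0 ≤ k) (hkn : k ≤ n) :
    (Icc 1 n).image (starPosRight n k) = Ioc 0 k ∪ Ioc n (2 * n - k) := by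
  ext x
  simp only [mem_image, mem_Icc, mem_union, mem_Ioc, starPosRight]
  constructor
  · rintro ⟨j, hj, rfl⟩
    split_ifs <;> omega
  · intro hx
    exact ⟨if x ≤ k then x else x - n + k, by split_ifs <;> omega, by split_ifs <;> omega⟩

theorem starMap_starPosLeft {j : ℤ} (hj : j ∈ Icc 1 n) :
    starMap n k π ρ (starPosLeft k j) = π j - k := by
  rw [mem_Icc] at hj
  unfold starPosLeft
  split_ifs with hjk
  · rw [starMap_of_nonpos (by omega) (by omega), sub_add_cancel]
  · rw [starMap_of_lt_of_le (by omega) hj.2]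

theorem starMap_starPosRight (hk : 0 ≤ k)
    (hπ : Set.BijOn π (Set.Icc 1 n) (Set.Icc 1 n)) (hρ : Set.BijOn ρ (Set.Icc 1 n) (Set.Icc 1 n))
    (hρd : NoDescentsAfter ρ k n) {j : ℤ} (hj : j ∈ Icc 1 n) :
    starMap n k π ρ (starPosRight n k j) = ρ j + n - k := by
  rw [mem_Icc] at hj
  unfold starPosRight
  split_ifs with hjk
  · rw [starMap_of_pos_of_le (by omega) hjk]
  · rw [starMap_of_gt hk hπ hρ hρd (by omega) (by omega), show j + n - k - n + k = j by ring]

theorem image_starPosLeft_union_image_starPosRight (hk : 0 ≤ k) (hkn : k ≤ n) :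
    (Icc 1 n).image (starPosLeft k) ∪ (Icc 1 n).image (starPosRight n k) =
      Icc (1 - k) (2 * n - k) := by
  ext x
  simp only [image_starPosLeft hk hkn, image_starPosRight hk hkn, mem_Icc, mem_union, mem_Ioc]
  omega

theorem disjoint_image_starPosLeft_image_starPosRight (hk : 0 ≤ k) (hkn : k ≤ n) :
    Disjoint ((Icc 1 n).image (starPosLeft k)) ((Icc 1 n).image (starPosRight n k)) := by
  simp only [image_starPosLeft hk hkn, image_starPosRight hk hkn, disjoint_left, mem_union,
    mem_Ioc]
  omega

theorem crossInvCount_starMap_right_left (hk : 0 ≤ k) (hkn : k ≤ n)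
    (hπ : Set.MapsTo π (Set.Icc 1 n) (Set.Icc 1 n))
    (hρ : Set.MapsTo ρ (Set.Icc 1 n) (Set.Icc 1 n)) :
    (crossInvCount (starMap n k π ρ) (Ioc 0 k ∪ Ioc n (2 * n - k)) (Ioc (-k) 0 ∪ Ioc k n) : ℤ) =
      k * (n - k) := by
  have hdisj (a b c d : ℤ) (h : b ≤ c) : Disjoint (Ioc a b) (Ioc c d) :=
    disjoint_left.2 fun x hx hx' => by rw [mem_Ioc] at hx hx'; omega
  have hbefore (a b c d : ℤ) (h : d ≤ a) :
      crossInvCount (starMap n k π ρ) (Ioc a b) (Ioc c d) = 0 :=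
    crossInvCount_eq_zero fun i hi j hj hij => by rw [mem_Ioc] at hi hj; omega
  have hBC : crossInvCount (starMap n k π ρ) (Ioc 0 k) (Ioc k n) = #(Ioc 0 k) * #(Ioc k n) :=
    crossInvCount_eq_card_mul fun i hi j hj => by
      rw [mem_Ioc] at hi hj
      rw [starMap_of_pos_of_le hi.1 hi.2, starMap_of_lt_of_le hj.1 hj.2]
      have := hρ (show i ∈ Set.Icc 1 n from ⟨by omega, by omega⟩)
      have := hπ (show j ∈ Set.Icc 1 n from ⟨by omega, by omega⟩)
      exact ⟨by omega, by grind⟩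
  rw [crossInvCount_union_left _ _ (hdisj _ _ _ _ hkn),
    crossInvCount_union_right _ _ (hdisj _ _ _ _ hk),
    crossInvCount_union_right _ _ (hdisj _ _ _ _ hk), hBC, hbefore _ _ _ _ le_rfl,
    hbefore _ _ _ _ (by omega), hbefore _ _ _ _ le_rfl, Int.card_Ioc, Int.card_Ioc]
  push_cast
  rw [Int.toNat_of_nonneg (by omega), Int.toNat_of_nonneg (by omega)]
  ring

end StarMap

theorem star_length_general (n k : ℤ) (π ρ : ℤ → ℤ) (hk1 : 1 ≤ k) (hkn : k ≤ n)
    (hπ : Set.BijOn π (Set.Icc 1 n) (Set.Icc 1 n))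
    (hρ : Set.BijOn ρ (Set.Icc 1 n) (Set.Icc 1 n))
    (hρd : NoDescentsAfter ρ k n) :
    (invCount (starMap n k π ρ) (1 - k) (2 * n - k) : ℤ) =
      invCount π 1 n + invCount ρ 1 n + k * (n - k) := by
  have hk : 0 ≤ k := by omega
  rw [invCount_eq_crossInvCount, ← image_starPosLeft_union_image_starPosRight hk hkn,
    crossInvCount_union_union _ (disjoint_image_starPosLeft_image_starPosRight hk hkn)]
  set P := (Icc 1 n).image (starPosLeft k)
  set Q := (Icc 1 n).image (starPosRight n k)
  have hP : crossInvCount (starMap n k π ρ) P P = invCount π 1 n :=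
    crossInvCount_image_of_strictMono (φ := (· - k)) (starPosLeft_strictMono hk)
      (fun a b hab => by simpa using hab) fun j hj => starMap_starPosLeft (by simpa using hj)
  have hQ : crossInvCount (starMap n k π ρ) Q Q = invCount ρ 1 n :=
    crossInvCount_image_of_strictMono (φ := (· + n - k)) (starPosRight_strictMono hkn)
      (fun a b hab => by simpa using hab)
      fun j hj => starMap_starPosRight hk hπ hρ hρd (by simpa using hj)
  have hPQ : crossInvCount (starMap n k π ρ) P Q = 0 := by
    refine crossInvCount_eq_zero fun i hi j hj _ => ?_
    obtain ⟨a, ha, rfl⟩ := mem_image.1 hi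
    obtain ⟨b, hb, rfl⟩ := mem_image.1 hj
    rw [starMap_starPosLeft ha, starMap_starPosRight hk hπ hρ hρd hb]
    linarith [(hπ.mapsTo (mem_Icc.1 ha)).2, (hρ.mapsTo (mem_Icc.1 hb)).1]
  have hQP : (crossInvCount (starMap n k π ρ) Q P : ℤ) = k * (n - k) := by
    simp only [P, Q, image_starPosLeft hk hkn, image_starPosRight hk hkn]
    exact crossInvCount_starMap_right_left hk hkn hπ.mapsTo hρ.mapsTo
  push_cast
  rw [hP, hQ, hPQ, hQP]
  ring

theorem star_length (n k : ℤ) (π ρ : ℤ → ℤ) (hn : 1 ≤ n) (hk1 : 1 ≤ k) (hkn : k ≤ n)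
    (hπ : Set.BijOn π (Set.Icc 1 n) (Set.Icc 1 n))
    (hρ : Set.BijOn ρ (Set.Icc 1 n) (Set.Icc 1 n))
    (hπd : NoDescentsBefore π k) (hρd : NoDescentsAfter ρ k n) :
    (invCount (starMap n k π ρ) (1 - k) (2 * n - k) : ℤ) =
      invCount π 1 n + invCount ρ 1 n + k * (n - k) :=
  star_length_general n k π ρ hk1 hkn hπ hρ hρd
end
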